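/- Let n ≥ 3 and let S_1,...,S_n be a partition of T_{2n} into pairwise isomorphic plane spanning trees with v_iw_i ∈ E(S_i). Then for every i with 2 ≤ i ≤ n−1, the tree S_i contains the edges v_1v_i, v_2v_i, ..., v_{i−1}v_i and the edges w_1w_i, w_2w_i, ..., w_{i−1}w_i. -/

import Mathlib

open SimpleGraph

/-- Two edges of the complete twisted graph cross: writing the edges as `{a,b}` and
`{c,d}` with `a < b` and `c < d` in the linear vertex order, they cross iff
`a < c < d < b` or `c < a < b < d`. -/
def Cross {m : ℕ} (e f : Sym2 (Fin m)) : Prop :=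
  ∃ a b c d : Fin m, a < b ∧ c < d ∧ e = s(a, b) ∧ f = s(c, d) ∧
    ((a < c ∧ d < b) ∨ (c < a ∧ b < d))

/-- A subgraph of the twisted graph is plane if no two of its edges cross. -/
def IsPlane {m : ℕ} (G : SimpleGraph (Fin m)) : Prop :=
  ∀ e ∈ G.edgeSet, ∀ f ∈ G.edgeSet, ¬ Cross e f

/-- A partition of the complete twisted graph `T_{2n}` into plane spanning trees:
`n` plane spanning trees such that every edge of the complete graph lies in
exactly one of them. -/
def IsTwistedPartition {n : ℕ} (S : Fin n → SimpleGraph (Fin (2 * n))) : Prop :=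
  (∀ i, (S i).IsTree ∧ IsPlane (S i)) ∧
    ∀ u v : Fin (2 * n), u ≠ v → ∃! i, (S i).Adj u v

/-- The vertex `v_i` (1-indexed) of `T_{2n}`, i.e. vertex number `i - 1` in the
linear order `v_1 < v_2 < ... < v_n < w_n < ... < w_1`. -/
def vv (n : ℕ) (hn : 0 < n) (i : ℕ) : Fin (2 * n) :=
  ⟨(i - 1) % (2 * n), Nat.mod_lt _ (by omega)⟩

/-- The vertex `w_i` (1-indexed) of `T_{2n}`, i.e. vertex number `2n - i` in the
linear order `v_1 < v_2 < ... < v_n < w_n < ... < w_1`. -/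
def ww (n : ℕ) (hn : 0 < n) (i : ℕ) : Fin (2 * n) :=
  ⟨(2 * n - i) % (2 * n), Nat.mod_lt _ (by omega)⟩

/-!
The tree `S_1` contains the edge `v_1 w_1` between the two extreme vertices, so by planarity each of
its edges meets `v_1` or `w_1`. Every vertex has degree at least one in each of the `n` trees and
total degree `2n - 1`, hence degree at most `n` in any one tree; so `v_1` and `w_1` both have
degree `n`, all other vertices are leaves, and `S_1`, hence every `S_i`, is a double star with two
centres of degree `n`. A vertex is a centre of at most one tree.

By induction on `i`, the centres of `S_i` are `v_i` and `w_i`. Otherwise one of them, `c`, is a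
centre whose partner lies strictly between `v_i` and `w_i`; planarity makes every vertex strictly
between them a leaf at `c`. Since the outer vertices `v_j, w_j` (`j < i`) are leaves in all trees
`S_m` with `m ≥ i`, at least `i - 1` of the `2(i - 1)` edges from `c` to them lie in `S_i`, and `c`
gets degree at least `2n - i > n`.

Finally, if an outer vertex `v_j` hung on `w_i`, planarity would put every middle vertex on `w_i`
too and leave `v_i` with degree at most `i < n`.
-/

open Finset
open scoped Classical

namespace SimpleGraph

variable {V W : Type*}

section Finite

variable [Fintype V] [Fintype W]

structure IsDoubleStar (G : SimpleGraph V) (k : ℕ) (a b : V) : Prop where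
  adj : G.Adj a b
  degree_left : G.degree a = k
  degree_right : G.degree b = k
  degree_eq_one : ∀ v, v ≠ a → v ≠ b → G.degree v = 1
  touches : ∀ ⦃u w⦄, G.Adj u w → u = a ∨ u = b ∨ w = a ∨ w = b

namespace IsDoubleStar

variable {G : SimpleGraph V} {k : ℕ} {a b : V}

lemma symm (h : G.IsDoubleStar k a b) : G.IsDoubleStar k b a where
  adj := h.adj.symm
  degree_left := h.degree_right
  degree_right := h.degree_left
  degree_eq_one v hb ha := h.degree_eq_one v ha hb
  touches u w huw := by rcases h.touches huw with h | h | h | h <;> simp [h]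

lemma map {G' : SimpleGraph W} (h : G.IsDoubleStar k a b) (φ : G ≃g G') :
    G'.IsDoubleStar k (φ a) (φ b) where
  adj := φ.map_adj_iff.2 h.adj
  degree_left := (φ.degree_eq a).trans h.degree_left
  degree_right := (φ.degree_eq b).trans h.degree_right
  degree_eq_one v ha hb := by
    rw [← φ.apply_symm_apply v, φ.degree_eq]
    exact h.degree_eq_one _ (fun h' => ha (by rw [← h', φ.apply_symm_apply]))
      (fun h' => hb (by rw [← h', φ.apply_symm_apply]))
  touches u w huw := by
    rcases h.touches (φ.symm.map_adj_iff.2 huw) with h | h | h | h <;>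
      simp [← h]

lemma degree_eq_or (h : G.IsDoubleStar k a b) (v : V) : G.degree v = k ∨ G.degree v = 1 := by
  by_cases ha : v = a
  · exact .inl (ha ▸ h.degree_left)
  by_cases hb : v = b
  · exact .inl (hb ▸ h.degree_right)
  exact .inr (h.degree_eq_one v ha hb)

lemma eq_or_eq_of_degree_eq (h : G.IsDoubleStar k a b) (hk : k ≠ 1) {v : V}
    (hv : G.degree v = k) : v = a ∨ v = b := by
  by_contra! hab
  exact hk (hv ▸ h.degree_eq_one v hab.1 hab.2)

lemma exists_of_degree_eq (h : G.IsDoubleStar k a b) (hk : k ≠ 1) {c : V}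
    (hc : G.degree c = k) : ∃ d, G.IsDoubleStar k c d := by
  rcases h.eq_or_eq_of_degree_eq hk hc with rfl | rfl
  exacts [⟨b, h⟩, ⟨a, h.symm⟩]

lemma of_degree_eq (h : G.IsDoubleStar k a b) (hk : k ≠ 1) {c d : V} (hcd : c ≠ d)
    (hc : G.degree c = k) (hd : G.degree d = k) : G.IsDoubleStar k c d := by
  rcases h.eq_or_eq_of_degree_eq hk hc with rfl | rfl <;>
    rcases h.eq_or_eq_of_degree_eq hk hd with rfl | rfl
  exacts [absurd rfl hcd, h, h.symm, absurd rfl hcd]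

lemma degree_eq_or_degree_eq_of_adj (h : G.IsDoubleStar k a b) {u w : V} (huw : G.Adj u w) :
    G.degree u = k ∨ G.degree w = k := by
  rcases h.touches huw with rfl | rfl | rfl | rfl
  exacts [.inl h.degree_left, .inl h.degree_right, .inr h.degree_left, .inr h.degree_right]

lemma adj_or_adj (h : G.IsDoubleStar k a b) {v : V} (ha : v ≠ a) (hb : v ≠ b) :
    G.Adj v a ∨ G.Adj v b := by
  obtain ⟨w, hvw⟩ := (G.degree_pos_iff_exists_adj v).1 (by rw [h.degree_eq_one v ha hb]; omega)
  rcases h.touches hvw with h' | h' | rfl | rfl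
  exacts [absurd h' ha, absurd h' hb, .inl hvw, .inr hvw]

end IsDoubleStar

lemma IsTree.degree_eq_one_of_add_degree_eq {G : SimpleGraph V} (hG : G.IsTree) {a b : V}
    (hab : a ≠ b) (hdeg : G.degree a + G.degree b = Fintype.card V) {v : V} (ha : v ≠ a)
    (hb : v ≠ b) : G.degree v = 1 := by
  have : Nontrivial V := ⟨⟨a, b, hab⟩⟩
  have hpos x : 0 < G.degree x := hG.connected.preconnected.degree_pos_of_nontrivial x
  have hsum : ∑ x, G.degree x = 2 * (Fintype.card V - 1) := by
    rw [sum_degrees_eq_twice_card_edges, ← hG.card_edgeFinset, Nat.add_sub_cancel]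
  have hb' : b ∈ univ.erase a := mem_erase.2 ⟨hab.symm, mem_univ b⟩
  have hv' : v ∈ (univ.erase a).erase b := mem_erase.2 ⟨hb, mem_erase.2 ⟨ha, mem_univ v⟩⟩
  have hrest := card_nsmul_le_sum (((univ.erase a).erase b).erase v) (G.degree ·) 1
    fun x _ => hpos x
  rw [← sum_erase_add _ _ (mem_univ a), ← sum_erase_add _ _ hb', ← sum_erase_add _ _ hv']
    at hsum
  simp only [card_erase_of_mem hv', card_erase_of_mem hb', card_erase_of_mem (mem_univ a),
    card_univ, smul_eq_mul, mul_one] at hrest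
  have hv := hpos v
  omega

lemma IsTree.isDoubleStar {G : SimpleGraph V} (hG : G.IsTree) {k : ℕ} {a b : V}
    (hab : G.Adj a b) (htouch : ∀ ⦃u w⦄, G.Adj u w → u = a ∨ u = b ∨ w = a ∨ w = b)
    (hle : ∀ v, G.degree v ≤ k) (hcard : Fintype.card V = 2 * k) : G.IsDoubleStar k a b := by
  have : Nontrivial V := ⟨⟨a, b, hab.ne⟩⟩
  have hcover : univ ⊆ G.neighborFinset a ∪ G.neighborFinset b := by
    intro v _
    simp only [mem_union, mem_neighborFinset]
    by_cases ha : v = a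
    · exact .inr (ha ▸ hab.symm)
    by_cases hb : v = b
    · exact .inl (hb ▸ hab)
    obtain ⟨w, hvw⟩ := (G.degree_pos_iff_exists_adj v).1
      (hG.connected.preconnected.degree_pos_of_nontrivial v)
    rcases htouch hvw with h | h | rfl | rfl
    exacts [absurd h ha, absurd h hb, .inl hvw.symm, .inr hvw.symm]
  have hsum : Fintype.card V ≤ G.degree a + G.degree b :=
    (card_le_card hcover).trans (card_union_le _ _)
  have hka := hle a
  have hkb := hle b
  exact ⟨hab, by omega, by omega,
    fun v ha hb => hG.degree_eq_one_of_add_degree_eq hab.ne (by omega) ha hb, htouch⟩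

end Finite

section Partition

variable {ι : Type*} [Fintype ι] {S : ι → SimpleGraph V}

lemma sum_card_filter_adj_of_partition (hpart : ∀ u v, u ≠ v → ∃! i, (S i).Adj u v) {v : V}
    {s : Finset V} (hv : v ∉ s) : ∑ i, #{x ∈ s | (S i).Adj v x} = #s := by
  simp_rw [card_filter]
  rw [sum_comm, card_eq_sum_ones]
  refine sum_congr rfl fun x hx => ?_
  obtain ⟨j, hj, huniq⟩ := hpart v x (ne_of_mem_of_not_mem hx hv).symm
  rw [sum_eq_single j (fun m _ hm => if_neg (mt (huniq m) hm)) (by simp), if_pos hj]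

variable [Fintype V]

lemma sum_degree_of_partition (hpart : ∀ u v, u ≠ v → ∃! i, (S i).Adj u v) (v : V) :
    ∑ i, (S i).degree v = Fintype.card V - 1 := by
  rw [← card_univ, ← card_erase_of_mem (mem_univ v),
    ← sum_card_filter_adj_of_partition hpart (notMem_erase v univ)]
  refine sum_congr rfl fun i _ => ?_
  rw [← card_neighborFinset_eq_degree, neighborFinset_eq_filter]
  congr 1
  ext x
  simpa using fun h : (S i).Adj v x => h.ne'

lemma degree_add_card_le_of_partition (hpart : ∀ u v, u ≠ v → ∃! i, (S i).Adj u v)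
    (hpos : ∀ i v, 0 < (S i).degree v) (i : ι) (v : V) :
    (S i).degree v + Fintype.card ι ≤ Fintype.card V := by
  have hrest := card_nsmul_le_sum (univ.erase i) (fun j => (S j).degree v) 1 fun j _ => hpos j v
  have hsum := sum_degree_of_partition hpart v
  rw [← sum_erase_add _ _ (mem_univ i)] at hsum
  have hι := Fintype.card_pos_iff.2 ⟨i⟩
  simp only [card_erase_of_mem (mem_univ i), card_univ, smul_eq_mul, mul_one] at hrest
  have hi := hpos i v
  omega

lemma eq_of_degree_eq_of_partition (hpart : ∀ u v, u ≠ v → ∃! i, (S i).Adj u v) {k : ℕ}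
    (hk : Fintype.card V ≤ 2 * k) {v : V} {i j : ι} (hi : (S i).degree v = k)
    (hj : (S j).degree v = k) : i = j := by
  by_contra hij
  have hle := add_le_sum (f := fun j => (S j).degree v) (fun _ _ => Nat.zero_le _) (mem_univ i)
    (mem_univ j) hij
  have hV := Fintype.card_pos_iff.2 ⟨v⟩
  rw [sum_degree_of_partition hpart] at hle
  omega

end Partition

section Plane

variable {m k : ℕ} {G : SimpleGraph (Fin m)}

lemma IsPlane.not_adj_of_between (hG : IsPlane G) {p q u w : Fin m} (hpq : G.Adj p q)
    (hpu : p < u) (huq : u < q) (hpw : p < w) (hwq : w < q) : ¬ G.Adj u w := by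
  intro huw
  rcases lt_or_gt_of_ne huw.ne with h | h
  · exact hG _ hpq _ huw ⟨p, q, u, w, hpu.trans huq, h, rfl, rfl, .inl ⟨hpu, hwq⟩⟩
  · exact hG _ hpq _ huw.symm ⟨p, q, w, u, hpu.trans huq, h, rfl, rfl, .inl ⟨hpw, huq⟩⟩

lemma IsPlane.touches_of_adj_of_le (hG : IsPlane G) {p q : Fin m} (hpq : G.Adj p q)
    (hp : ∀ x, p ≤ x) (hq : ∀ x, x ≤ q) ⦃u w : Fin m⦄ (huw : G.Adj u w) :
    u = p ∨ u = q ∨ w = p ∨ w = q := by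
  by_contra! h
  exact hG.not_adj_of_between hpq ((hp u).lt_of_ne' h.1) ((hq u).lt_of_ne h.2.1)
    ((hp w).lt_of_ne' h.2.2.1) ((hq w).lt_of_ne h.2.2.2) huw

lemma IsPlane.comap_rev (hG : IsPlane G) : IsPlane (G.comap Fin.revPerm) := by
  rintro _ he _ hf ⟨a, b, c, d, hab, hcd, rfl, rfl, ⟨hac, hdb⟩ | ⟨hca, hbd⟩⟩
  · exact hG.not_adj_of_between (G := G) (comap_adj.1 he).symm (Fin.rev_lt_rev.2 hdb)
      (Fin.rev_lt_rev.2 (hac.trans hcd)) (Fin.rev_lt_rev.2 (hcd.trans hdb))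
      (Fin.rev_lt_rev.2 hac) (comap_adj.1 hf).symm
  · exact hG.not_adj_of_between (G := G) (comap_adj.1 hf).symm (Fin.rev_lt_rev.2 hbd)
      (Fin.rev_lt_rev.2 (hca.trans hab)) (Fin.rev_lt_rev.2 (hab.trans hbd))
      (Fin.rev_lt_rev.2 hca) (comap_adj.1 he).symm

namespace IsDoubleStar

variable {c d p q : Fin m}

lemma adj_of_between (h : G.IsDoubleStar k c d) (hG : IsPlane G) (hpq : G.Adj p q)
    (hc : c = p ∨ c = q) (hpd : p < d) (hdq : d < q) {y : Fin m} (hpy : p < y) (hyq : y < q) :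
    G.Adj c y := by
  by_cases hyd : y = d
  · exact hyd ▸ h.adj
  have hyc : y ≠ c := by
    rcases hc with rfl | rfl
    exacts [hpy.ne', hyq.ne]
  rcases h.adj_or_adj hyc hyd with hyc | hyd'
  · exact hyc.symm
  · exact absurd hyd' (hG.not_adj_of_between hpq hpy hyq hpd hdq)

lemma degree_le_of_adj_right (h : G.IsDoubleStar k p q) (hG : IsPlane G) {x y : Fin m}
    (hxp : x < p) (hxq : G.Adj x q) (hpy : p < y) (hyq : y < q) : G.degree p ≤ p.val + 1 := by
  have hpq : p < q := hpy.trans hyq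
  have hnot : ∀ z, p < z → z < q → ¬ G.Adj p z := fun z hpz hzq =>
    hG.not_adj_of_between hxq hxp hpq (hxp.trans hpz) hzq
  have hyq' : G.Adj y q :=
    (h.adj_or_adj hpy.ne' hyq.ne).resolve_left fun h' => hnot y hpy hyq h'.symm
  have hsub : G.neighborFinset p ⊆ insert q (Iio p) := by
    intro w hw
    rw [mem_neighborFinset] at hw
    rw [mem_insert, mem_Iio]
    by_contra! hw'
    rcases hw'.2.lt_or_eq with hpw | rfl
    · rcases lt_or_gt_of_ne hw'.1 with hwq | hqw
      · exact hnot w hpw hwq hw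
      · exact hG.not_adj_of_between hw hpy (hyq.trans hqw) hpq hqw hyq'
    · exact hw.ne rfl
  calc G.degree p = #(G.neighborFinset p) := (card_neighborFinset_eq_degree G p).symm
    _ ≤ #(insert q (Iio p)) := card_le_card hsub
    _ ≤ p.val + 1 := by simpa using card_insert_le q (Iio p)

lemma degree_le_of_adj_left (h : G.IsDoubleStar k p q) (hG : IsPlane G) {x y : Fin m}
    (hqx : q < x) (hxp : G.Adj x p) (hpy : p < y) (hyq : y < q) :
    G.degree q ≤ q.rev.val + 1 := by
  have hrev := h.symm.map (Iso.comap Fin.revPerm G).symm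
  simp only [Iso.comap_symm_apply, Fin.revPerm_symm, Fin.revPerm_apply] at hrev
  have hdeg : G.degree q = (G.comap Fin.revPerm).degree q.rev := by
    have h' := (Iso.comap Fin.revPerm G).degree_eq q.rev
    rwa [Iso.comap_apply, Fin.revPerm_apply, Fin.rev_rev] at h'
  rw [hdeg]
  exact hrev.degree_le_of_adj_right hG.comap_rev (x := x.rev) (y := y.rev) (Fin.rev_lt_rev.2 hqx)
    (by simpa using hxp) (Fin.rev_lt_rev.2 hyq) (Fin.rev_lt_rev.2 hpy)

end IsDoubleStar

end Plane

end SimpleGraph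

section Twisted

variable {n : ℕ}

/-- `vPos i` is `v_{i+1}`, the vertex at position `i`; its reflection `(vPos i).rev` is
`w_{i+1}`. -/
def vPos (i : Fin n) : Fin (2 * n) := Fin.castLE (by omega) i

@[simp] lemma val_vPos (i : Fin n) : (vPos i).val = i.val := rfl

lemma vPos_lt_rev (i : Fin n) : vPos i < (vPos i).rev := by
  rw [Fin.lt_def, Fin.val_rev, val_vPos]
  omega

lemma val_vv (hn : 0 < n) {t : ℕ} (ht : t ≤ 2 * n) : (vv n hn t).val = t - 1 :=
  Nat.mod_eq_of_lt (by omega)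

lemma vv_succ (hn : 0 < n) (i : Fin n) : vv n hn (i.val + 1) = vPos i :=
  Fin.ext (by rw [val_vv hn (by omega), val_vPos, Nat.add_sub_cancel])

lemma ww_eq_rev_vv (hn : 0 < n) {t : ℕ} (ht : 1 ≤ t) (ht' : t ≤ 2 * n) :
    ww n hn t = (vv n hn t).rev := by
  refine Fin.ext ?_
  rw [Fin.val_rev, val_vv hn ht']
  exact (Nat.mod_eq_of_lt (by omega)).trans (by omega)

def outerVertices (i : Fin n) : Finset (Fin (2 * n)) := Iio (vPos i) ∪ Ioi (vPos i).rev

lemma mem_outerVertices {i : Fin n} {x : Fin (2 * n)} :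
    x ∈ outerVertices i ↔ x < vPos i ∨ (vPos i).rev < x := by
  simp [outerVertices]

lemma card_outerVertices (i : Fin n) : #(outerVertices i) = 2 * i.val := by
  have hdisj : Disjoint (Iio (vPos i)) (Ioi (vPos i).rev) :=
    disjoint_left.2 fun x hx hx' =>
      (mem_Iio.1 hx).not_gt ((vPos_lt_rev i).trans (mem_Ioi.1 hx'))
  rw [outerVertices, card_union_of_disjoint hdisj, Fin.card_Iio, Fin.card_Ioi, Fin.val_rev,
    val_vPos]
  omega

structure IsPlaneDoubleStarPartition (S : Fin n → SimpleGraph (Fin (2 * n))) : Prop where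
  plane : ∀ i, IsPlane (S i)
  partition : ∀ u v, u ≠ v → ∃! i, (S i).Adj u v
  isDoubleStar : ∀ i, ∃ a b, (S i).IsDoubleStar n a b
  adj_vPos : ∀ i, (S i).Adj (vPos i) (vPos i).rev

variable {S : Fin n → SimpleGraph (Fin (2 * n))}

lemma IsTwistedPartition.isPlaneDoubleStarPartition (hS : IsTwistedPartition S)
    (hiso : ∀ i j, Nonempty (S i ≃g S j)) (hc : ∀ i, (S i).Adj (vPos i) (vPos i).rev) :
    IsPlaneDoubleStarPartition S where
  plane i := (hS.1 i).2
  partition := hS.2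
  adj_vPos := hc
  isDoubleStar i := by
    have hn : 0 < n := i.pos
    have : Nontrivial (Fin (2 * n)) := Fin.nontrivial_iff_two_le.2 (by omega)
    have hpos j v : 0 < (S j).degree v :=
      (hS.1 j).1.connected.preconnected.degree_pos_of_nontrivial v
    let i₀ : Fin n := ⟨0, hn⟩
    have hmin x : vPos i₀ ≤ x := Fin.le_iff_val_le_val.2 (Nat.zero_le _)
    have hmax x : x ≤ (vPos i₀).rev :=
      Fin.le_iff_val_le_val.2 (by simp only [Fin.val_rev, val_vPos, i₀]; omega)
    have hstar : (S i₀).IsDoubleStar n (vPos i₀) (vPos i₀).rev :=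
      (hS.1 i₀).1.isDoubleStar (hc i₀) ((hS.1 i₀).2.touches_of_adj_of_le (hc i₀) hmin hmax)
        (fun v => by
          have h := degree_add_card_le_of_partition hS.2 hpos i₀ v
          simp only [Fintype.card_fin] at h
          omega)
        (Fintype.card_fin _)
    obtain ⟨φ⟩ := hiso i₀ i
    exact ⟨_, _, hstar.map φ⟩

namespace IsPlaneDoubleStarPartition

lemma degree_eq_or (hS : IsPlaneDoubleStarPartition S) (i : Fin n) (v : Fin (2 * n)) :
    (S i).degree v = n ∨ (S i).degree v = 1 :=
  let ⟨_, _, h⟩ := hS.isDoubleStar i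
  h.degree_eq_or v

lemma degree_eq_one_of_ne (hS : IsPlaneDoubleStarPartition S) {v : Fin (2 * n)} {i j : Fin n}
    (hi : (S i).degree v = n) (hj : j ≠ i) : (S j).degree v = 1 :=
  (hS.degree_eq_or j v).resolve_left fun h =>
    hj (eq_of_degree_eq_of_partition hS.partition (by simp) h hi)

lemma degree_eq_one_of_mem_outerVertices (hS : IsPlaneDoubleStarPartition S) {i m : Fin n}
    (IH : ∀ t < i, (S t).IsDoubleStar n (vPos t) (vPos t).rev) {p : Fin (2 * n)}
    (hp : p ∈ outerVertices i) (him : i ≤ m) : (S m).degree p = 1 := by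
  obtain ⟨t, hti, hpt⟩ : ∃ t < i, p = vPos t ∨ p = (vPos t).rev := by
    rcases mem_outerVertices.1 hp with h | h
    · exact ⟨⟨p.val, Nat.lt_trans h i.isLt⟩, h, .inl rfl⟩
    · rw [Fin.rev_lt_iff] at h
      refine ⟨⟨p.rev.val, Nat.lt_trans h i.isLt⟩, h, .inr (Fin.ext ?_)⟩
      simp only [Fin.val_rev, val_vPos]
      omega
  have hdeg : (S t).degree p = n := by
    rcases hpt with rfl | rfl
    exacts [(IH t hti).degree_left, (IH t hti).degree_right]
  exact hS.degree_eq_one_of_ne hdeg (hti.trans_le him).ne'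

lemma card_outerVertices_le (hS : IsPlaneDoubleStarPartition S) {i : Fin n}
    (IH : ∀ t < i, (S t).IsDoubleStar n (vPos t) (vPos t).rev) (hn : n ≠ 1) {c : Fin (2 * n)}
    (hc : (S i).degree c = n) :
    #(outerVertices i) ≤ i.val + #{x ∈ outerVertices i | (S i).Adj c x} := by
  -- Each edge from `c` to an outer vertex lies in exactly one tree `S m`. For `m < i` the vertex
  -- `c` is a leaf of `S m`, and for `m > i` so is the outer vertex, so `S m` holds at most one
  -- such edge, resp. none.
  set f : Fin n → ℕ := fun m => #{x ∈ outerVertices i | (S m).Adj c x}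
  have hcO : c ∉ outerVertices i := fun h =>
    hn (hc.symm.trans (hS.degree_eq_one_of_mem_outerVertices IH h le_rfl))
  have hle m (hm : m < i) : f m ≤ 1 := by
    refine (card_le_card fun x hx => ?_).trans (hS.degree_eq_one_of_ne hc hm.ne).le
    exact (mem_neighborFinset _ _ _).2 (mem_filter.1 hx).2
  have hzero m (hm : m ∉ insert i (Iio i)) : f m = 0 := by
    simp only [mem_insert, mem_Iio, not_or, not_lt] at hm
    refine card_eq_zero.2 (filter_eq_empty_iff.2 fun x hx hcx => ?_)
    obtain ⟨a, b, hab⟩ := hS.isDoubleStar m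
    have hc1 := hS.degree_eq_one_of_ne hc hm.1
    have hx1 := hS.degree_eq_one_of_mem_outerVertices IH hx hm.2
    rcases hab.degree_eq_or_degree_eq_of_adj hcx with h | h <;> omega
  calc #(outerVertices i) = ∑ m, f m := (sum_card_filter_adj_of_partition hS.partition hcO).symm
    _ = f i + ∑ m ∈ Iio i, f m := by
      rw [← sum_subset (subset_univ _) fun m _ hm => hzero m hm, sum_insert (by simp)]
    _ ≤ f i + #(Iio i) • 1 := by
      gcongr
      exact sum_le_card_nsmul _ _ _ fun m hm => hle m (mem_Iio.1 hm)
    _ = i.val + f i := by rw [Fin.card_Iio, smul_eq_mul, mul_one, add_comm]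

lemma not_Ioo_subset_neighborFinset (hS : IsPlaneDoubleStarPartition S) {i : Fin n}
    (IH : ∀ t < i, (S t).IsDoubleStar n (vPos t) (vPos t).rev) (hi : i.val + 2 ≤ n)
    {c f : Fin (2 * n)} (hc : c = vPos i ∨ c = (vPos i).rev)
    (hf : f = vPos i ∨ f = (vPos i).rev) (hcf : c ≠ f) (hdeg : (S i).degree c = n) :
    ¬ Ioo (vPos i) (vPos i).rev ⊆ (S i).neighborFinset c := by
  intro hmid
  have hpq := vPos_lt_rev i
  have hsub : insert f (Ioo (vPos i) (vPos i).rev ∪ {x ∈ outerVertices i | (S i).Adj c x}) ⊆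
      (S i).neighborFinset c := by
    refine insert_subset ((mem_neighborFinset _ _ _).2 ?_) (union_subset hmid fun x hx => ?_)
    · rcases hc with rfl | rfl <;> rcases hf with rfl | rfl
      exacts [absurd rfl hcf, hS.adj_vPos i, (hS.adj_vPos i).symm, absurd rfl hcf]
    · exact (mem_neighborFinset _ _ _).2 (mem_filter.1 hx).2
  have hdisj : Disjoint (Ioo (vPos i) (vPos i).rev) {x ∈ outerVertices i | (S i).Adj c x} :=
    disjoint_left.2 fun x hx hx' => by
      rw [mem_Ioo] at hx
      rcases mem_outerVertices.1 (mem_filter.1 hx').1 with h | h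
      exacts [h.not_gt hx.1, h.not_gt hx.2]
  have hfnot : f ∉ Ioo (vPos i) (vPos i).rev ∪ {x ∈ outerVertices i | (S i).Adj c x} := by
    rcases hf with rfl | rfl <;> simp [mem_outerVertices, hpq.le]
  have hcard := card_le_card hsub
  rw [card_insert_of_notMem hfnot, card_union_of_disjoint hdisj, Fin.card_Ioo, Fin.val_rev,
    val_vPos, card_neighborFinset_eq_degree, hdeg] at hcard
  have hcount := hS.card_outerVertices_le IH (by omega) hdeg
  rw [card_outerVertices] at hcount
  omega

lemma degree_eq_of_degree_eq (hS : IsPlaneDoubleStarPartition S) {i : Fin n}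
    (IH : ∀ t < i, (S t).IsDoubleStar n (vPos t) (vPos t).rev) (hi : i.val + 2 ≤ n)
    {c f : Fin (2 * n)} (hc : c = vPos i ∨ c = (vPos i).rev)
    (hf : f = vPos i ∨ f = (vPos i).rev) (hcf : c ≠ f) (hdeg : (S i).degree c = n) :
    (S i).degree f = n := by
  by_contra hfn
  have hn : n ≠ 1 := by omega
  obtain ⟨a, b, hab⟩ := hS.isDoubleStar i
  obtain ⟨d, hd⟩ := hab.exists_of_degree_eq hn hdeg
  have hdO : d ∉ outerVertices i := fun h =>
    hn (hd.degree_right.symm.trans (hS.degree_eq_one_of_mem_outerVertices IH h le_rfl))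
  have hdf : d ≠ f := fun h => hfn (h ▸ hd.degree_right)
  have hdc : d ≠ c := hd.adj.ne'
  have hdmid : vPos i < d ∧ d < (vPos i).rev := by
    simp only [mem_outerVertices, not_or, not_lt] at hdO
    refine ⟨hdO.1.lt_of_ne ?_, hdO.2.lt_of_ne ?_⟩ <;>
      rcases hc with rfl | rfl <;> rcases hf with rfl | rfl <;> grind
  refine hS.not_Ioo_subset_neighborFinset IH hi hc hf hcf hdeg fun y hy => ?_
  exact (mem_neighborFinset _ _ _).2 (hd.adj_of_between (hS.plane i) (hS.adj_vPos i) hc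
    hdmid.1 hdmid.2 (mem_Ioo.1 hy).1 (mem_Ioo.1 hy).2)

theorem isDoubleStar_vPos (hS : IsPlaneDoubleStarPartition S) (i : Fin n) (hi : i.val + 2 ≤ n) :
    (S i).IsDoubleStar n (vPos i) (vPos i).rev := by
  induction i using WellFoundedLT.induction with
  | _ i IH =>
  have IH' t (ht : t < i) := IH t ht (by have : t.val < i.val := ht; omega)
  obtain ⟨a, b, hab⟩ := hS.isDoubleStar i
  have hne := (hS.adj_vPos i).ne
  rcases hab.degree_eq_or_degree_eq_of_adj (hS.adj_vPos i) with h | h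
  · exact hab.of_degree_eq (by omega) hne h
      (hS.degree_eq_of_degree_eq IH' hi (.inl rfl) (.inr rfl) hne h)
  · exact hab.of_degree_eq (by omega) hne
      (hS.degree_eq_of_degree_eq IH' hi (.inr rfl) (.inl rfl) hne.symm h) h

theorem adj_of_lt_vPos (hS : IsPlaneDoubleStarPartition S) {i : Fin n} (hi : i.val + 2 ≤ n)
    {x : Fin (2 * n)} (hx : x < vPos i) :
    (S i).Adj x (vPos i) ∧ (S i).Adj x.rev (vPos i).rev := by
  have h := hS.isDoubleStar_vPos i hi
  have hpq := vPos_lt_rev i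
  let y : Fin (2 * n) := ⟨i.val + 1, by omega⟩
  have hpy : vPos i < y := Fin.lt_def.2 (by simp [y])
  have hyq : y < (vPos i).rev := Fin.lt_def.2 (by simp only [Fin.val_rev, val_vPos, y]; omega)
  have hqx : (vPos i).rev < x.rev := Fin.rev_lt_rev.2 hx
  constructor
  · refine (h.adj_or_adj hx.ne (hx.trans hpq).ne).resolve_right fun hxq => ?_
    have hle := h.degree_le_of_adj_right (hS.plane i) hx hxq hpy hyq
    rw [h.degree_left, val_vPos] at hle
    omega
  · refine (h.adj_or_adj (hpq.trans hqx).ne' hqx.ne').resolve_left fun hxp => ?_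
    have hle := h.degree_le_of_adj_left (hS.plane i) hqx hxp hpy hyq
    rw [h.degree_right, Fin.rev_rev, val_vPos] at hle
    omega

end IsPlaneDoubleStarPartition

end Twisted

theorem iso_partition_outer_edges_general
    (n : ℕ) (hn : 0 < n) (S : Fin n → SimpleGraph (Fin (2 * n)))
    (hS : IsTwistedPartition S)
    (hiso : ∀ i j : Fin n, Nonempty ((S i) ≃g (S j)))
    (hc : ∀ i : Fin n, (S i).Adj (vv n hn (i.1 + 1)) (ww n hn (i.1 + 1))) :
    ∀ i : Fin n, 2 ≤ i.1 + 1 → i.1 + 1 ≤ n - 1 →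
      ∀ t : ℕ, 1 ≤ t → t ≤ i.1 →
        (S i).Adj (vv n hn t) (vv n hn (i.1 + 1)) ∧
        (S i).Adj (ww n hn t) (ww n hn (i.1 + 1)) := by
  intro i hi₂ hi t ht₁ hti
  have hvPos j : (S j).Adj (vPos j) (vPos j).rev := by
    have hj := j.isLt
    rw [← vv_succ hn, ← ww_eq_rev_vv hn (by omega) (by omega)]
    exact hc j
  have hx : vv n hn t < vPos i := Fin.lt_def.2 (by rw [val_vv hn (by omega), val_vPos]; omega)
  rw [ww_eq_rev_vv hn ht₁ (by omega), ww_eq_rev_vv hn (by omega) (by omega), vv_succ]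
  exact (hS.isPlaneDoubleStarPartition hiso hvPos).adj_of_lt_vPos (by omega) hx

/-- In any partition of `T_{2n}` into pairwise isomorphic plane spanning trees with
`v_i w_i ∈ E(S_i)`, for `2 ≤ i ≤ n - 1` the tree `S_i` contains the edges
`v_1 v_i, ..., v_{i-1} v_i` and the edges `w_1 w_i, ..., w_{i-1} w_i`.
Here `S_i` is `S ⟨i-1,_⟩`, i.e. the center vertex index of `S i` is `i.1 + 1`. -/
theorem iso_partition_outer_edges
    (n : ℕ) (hn : 0 < n) (hn3 : 3 ≤ n) (S : Fin n → SimpleGraph (Fin (2 * n)))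
    (hS : IsTwistedPartition S)
    (hiso : ∀ i j : Fin n, Nonempty ((S i) ≃g (S j)))
    (hc : ∀ i : Fin n, (S i).Adj (vv n hn (i.1 + 1)) (ww n hn (i.1 + 1))) :
    ∀ i : Fin n, 2 ≤ i.1 + 1 → i.1 + 1 ≤ n - 1 →
      ∀ t : ℕ, 1 ≤ t → t ≤ i.1 →
        (S i).Adj (vv n hn t) (vv n hn (i.1 + 1)) ∧
        (S i).Adj (ww n hn t) (ww n hn (i.1 + 1)) :=
  iso_partition_outer_edges_general n hn S hS hiso hc
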